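/- Let (F,Ω,⋆) be a stratified fusion system on a group S, let V ≤ S, and set R = N_S(V). For each subgroup X ≤ R set X• = (VX)⋆ ∩ R (here VX is a subgroup since X normalizes V), and set N_Ω(V) = {X• : X ≤ R}. Then: (a) (N_Ω(V),•) is a stratification on the fusion system N_F(V) on R; (b) the map X ↦ X⋆ is an injective homomorphism of posets N_Ω(V) → Ω; (c) if the maximal length dim(N_Ω(V)) of a strictly increasing chain in N_Ω(V) equals dim(Ω), then V ≤ 1⋆ and R⋆ = S, where 1 denotes the trivial subgroup of S. -/

import Mathlib

/-!
Every generator of `N_F(V)` extends to an `F`-morphism `XV → YV` mapping `V` onto `V`, and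
such morphisms form a fusion system on `N_S(V)`; hence so does every morphism of `N_F(V)`.
An `N_F(V)`-isomorphism `X → Y` therefore extends to `XV → YV` and then, by (St3), to an
`F`-isomorphism `(VX)⋆ → (VY)⋆` that still maps `V` onto `V`. Such a map respects normalizing
`V`, so it carries `X• = (VX)⋆ ∩ N_S(V)` onto `Y•`; this is (St3) for `•`, and the rest of (a) is
order bookkeeping. Since `X•⋆ = (VX)⋆`, every `A ∈ N_Ω(V)` is recovered as `A⋆ ∩ N_S(V)`, so `⋆`
is injective and strictly monotone on `N_Ω(V)`. A longest chain in `N_Ω(V)` is thus mapped to a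
longest chain in `Ω`, which can be extended neither below by `1⋆` nor above by `S`; its ends
`(VX)⋆ ≥ V` and `(VX')⋆ ≤ N_S(V)⋆` force `V ≤ 1⋆` and `N_S(V)⋆ = S`.
-/

/-- `F f X Y` asserts that the function `f : S → S` (through its restriction to `X`)
is an `F`-homomorphism from the subgroup `X` to the subgroup `Y`. -/
abbrev HomPred (S : Type*) [Group S] := (S → S) → Subgroup S → Subgroup S → Prop

/-- A fusion system, with hom-sets given by `F · X Y`, on the subgroup `T`
of the ambient group `S`.  Morphisms are represented by functions `S → S`,
two functions agreeing on `X` representing the same morphism `X → Y`. -/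
structure IsFusionSystem {S : Type*} [Group S] (T : Subgroup S) (F : HomPred S) : Prop where
  le_base : ∀ f X Y, F f X Y → X ≤ T ∧ Y ≤ T
  mapsTo : ∀ f X Y, F f X Y → Set.MapsTo f (X : Set S) (Y : Set S)
  injOn : ∀ f X Y, F f X Y → Set.InjOn f (X : Set S)
  map_mul' : ∀ f X Y, F f X Y → ∀ x ∈ X, ∀ y ∈ X, f (x * y) = f x * f y
  of_eqOn : ∀ f g X Y, F f X Y → Set.EqOn g f (X : Set S) → F g X Y
  conj_mem : ∀ g ∈ T, ∀ X Y : Subgroup S, X ≤ T → Y ≤ T →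
    (∀ x ∈ X, g⁻¹ * x * g ∈ Y) → F (fun x => g⁻¹ * x * g) X Y
  comp_mem : ∀ f g X Y Z, F f X Y → F g Y Z → F (g ∘ f) X Z
  restrict_mem : ∀ f X Y X₀ Y₀, F f X Y → X₀ ≤ X → Y₀ ≤ Y →
    Set.MapsTo f (X₀ : Set S) (Y₀ : Set S) → F f X₀ Y₀
  corestrict_mem : ∀ f X Y, F f X Y → F f X (Subgroup.closure (f '' (X : Set S)))
  inv_mem : ∀ f X Y, F f X Y →
    ∃ g, F g (Subgroup.closure (f '' (X : Set S))) X ∧ ∀ x ∈ X, g (f x) = x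

variable {S : Type*} [Group S]

/-- `f` is an `F`-isomorphism from `X` onto `Y`. -/
def IsFIso (F : HomPred S) (f : S → S) (X Y : Subgroup S) : Prop :=
  F f X Y ∧ f '' (X : Set S) = (Y : Set S)

/-- `X^F`, the set of `F`-conjugates of `X`. -/
def FConj (F : HomPred S) (X : Subgroup S) : Set (Subgroup S) :=
  {Y | ∃ f, IsFIso F f X Y}

/-- `N` is normal in the fusion system `F` on the base subgroup `T`:
`N` is normal in `T` and every `F`-isomorphism `X → Y` extends to an
`F`-isomorphism `XN → YN` mapping `N` onto `N`. -/
def NormalInF (T : Subgroup S) (F : HomPred S) (N : Subgroup S) : Prop :=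
  N ≤ T ∧ (∀ g ∈ T, ∀ n ∈ N, g⁻¹ * n * g ∈ N) ∧
    ∀ f X Y, IsFIso F f X Y →
      ∃ g, IsFIso F g (X ⊔ N) (Y ⊔ N) ∧ Set.EqOn g f (X : Set S) ∧
        g '' (N : Set S) = (N : Set S)

/-- The supremum of the lengths of strictly increasing chains in `Ω`
terminating in `A`. -/
noncomputable def dimEnd (Ω : Set (Subgroup S)) (A : Subgroup S) : ℕ :=
  sSup {n | ∃ c : Fin (n + 1) → Subgroup S,
    StrictMono c ∧ (∀ i, c i ∈ Ω) ∧ c (Fin.last n) = A}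

/-- The supremum of the lengths of strictly increasing chains in `Ω`. -/
noncomputable def dimOmega (Ω : Set (Subgroup S)) : ℕ :=
  sSup {n | ∃ c : Fin (n + 1) → Subgroup S, StrictMono c ∧ ∀ i, c i ∈ Ω}

/-- `(Ω, star)` is a stratification on the fusion system `F` on base `T`. -/
structure IsStratification (T : Subgroup S) (F : HomPred S)
    (Ω : Set (Subgroup S)) (star : Subgroup S → Subgroup S) : Prop where
  omega_le : ∀ A ∈ Ω, A ≤ T
  star_mem : ∀ X : Subgroup S, X ≤ T → star X ∈ Ω
  star_fix : ∀ A ∈ Ω, star A = A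
  star_mono : ∀ X Y : Subgroup S, X ≤ T → Y ≤ T → X ≤ Y → star X ≤ star Y
  finDim : ∃ N : ℕ, ∀ n : ℕ,
    (∃ c : Fin (n + 1) → Subgroup S, StrictMono c ∧ ∀ i, c i ∈ Ω) → n ≤ N
  conj_invariant : ∀ A ∈ Ω, ∀ f Y, IsFIso F f A Y → Y ∈ Ω
  le_star : ∀ X : Subgroup S, X ≤ T → X ≤ star X
  extend_star : ∀ f X Y, IsFIso F f X Y →
    ∃ g, IsFIso F g (star X) (star Y) ∧ Set.EqOn g f (X : Set S)

/-- `dim_Ω(X)`, the supremum of the lengths of strictly increasing chains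
in `Ω` terminating in `X⋆`. -/
noncomputable def dimStar (Ω : Set (Subgroup S)) (star : Subgroup S → Subgroup S)
    (X : Subgroup S) : ℕ :=
  dimEnd Ω (star X)

/-- `V` is fully normalized in the stratified fusion system `(F, Ω, star)` on base `T`. -/
def FullyNormalizedIn (T : Subgroup S) (F : HomPred S) (Ω : Set (Subgroup S))
    (star : Subgroup S → Subgroup S) (V : Subgroup S) : Prop :=
  ∀ U ∈ FConj F V, dimStar Ω star ((Subgroup.normalizer (U : Set S)) ⊓ T) ≤ dimStar Ω star ((Subgroup.normalizer (V : Set S)) ⊓ T)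

/-- `V` is fully centralized in the stratified fusion system `(F, Ω, star)` on base `T`. -/
def FullyCentralizedIn (T : Subgroup S) (F : HomPred S) (Ω : Set (Subgroup S))
    (star : Subgroup S → Subgroup S) (V : Subgroup S) : Prop :=
  ∀ U ∈ FConj F V,
    dimStar Ω star ((Subgroup.centralizer (U : Set S) ⊓ T) ⊔ U) ≤
      dimStar Ω star ((Subgroup.centralizer (V : Set S) ⊓ T) ⊔ V)

/-- `Γ` is an `F`-closed set of subgroups. -/
def FClosed (F : HomPred S) (Γ : Set (Subgroup S)) : Prop :=
  Γ.Nonempty ∧ (∀ X ∈ Γ, ∀ Y ∈ FConj F X, Y ∈ Γ) ∧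
    ∀ X ∈ Γ, ∀ Y : Subgroup S, X ≤ Y → Y ∈ Γ

/-- `Y` is normalizer-inductive in the fusion system `F` on base `T`. -/
def NormalizerInductive (T : Subgroup S) (F : HomPred S) (Y : Subgroup S) : Prop :=
  ∀ X ∈ FConj F Y, ∃ φ, F φ ((Subgroup.normalizer (X : Set S)) ⊓ T) ((Subgroup.normalizer (Y : Set S)) ⊓ T) ∧
    φ '' (X : Set S) = (Y : Set S)

/-- `Y` is centralizer-inductive in the fusion system `F` on base `T`. -/
def CentralizerInductive (T : Subgroup S) (F : HomPred S) (Y : Subgroup S) : Prop :=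
  ∀ X ∈ FConj F Y, ∃ ψ,
    F ψ ((Subgroup.centralizer (X : Set S) ⊓ T) ⊔ X)
        ((Subgroup.centralizer (Y : Set S) ⊓ T) ⊔ Y) ∧
    ψ '' (X : Set S) = (Y : Set S)

/-- `F` is `Γ`-inductive. -/
def GammaInductive (T : Subgroup S) (F : HomPred S) (Γ : Set (Subgroup S)) : Prop :=
  ∀ X ∈ Γ, ∃ Y ∈ FConj F X, NormalizerInductive T F Y

/-- `F` is inductive (i.e. `Sub(T)`-inductive). -/
def InductiveFS (T : Subgroup S) (F : HomPred S) : Prop :=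
  ∀ X : Subgroup S, X ≤ T → ∃ Y ∈ FConj F X, NormalizerInductive T F Y

/-- `⟨Φ⟩_T`: the smallest fusion system on `T` all of whose homomorphisms are
`Famb`-homomorphisms and whose hom-sets contain `Φ`. -/
def GenFS (T : Subgroup S) (Famb : HomPred S) (Φ : HomPred S) : HomPred S :=
  fun f X Y => ∀ E : HomPred S, IsFusionSystem T E →
    (∀ g A B, E g A B → Famb g A B) → (∀ g A B, Φ g A B → E g A B) → E f X Y

/-- The generating set `Φ` for `N_F(V)`: `F`-isomorphisms between subgroups of
`N_S(V)` extending to `F`-isomorphisms `XV → YV` restricting to an automorphism of `V`. -/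
def NPhi (F : HomPred S) (V : Subgroup S) : HomPred S :=
  fun f X Y => X ≤ (Subgroup.normalizer (V : Set S)) ∧ Y ≤ (Subgroup.normalizer (V : Set S)) ∧ IsFIso F f X Y ∧
    ∃ g, IsFIso F g (X ⊔ V) (Y ⊔ V) ∧ Set.EqOn g f (X : Set S) ∧
      g '' (V : Set S) = (V : Set S)

/-- The fusion system `N_F(V)` on `N_S(V)`. -/
def NFus (F : HomPred S) (V : Subgroup S) : HomPred S :=
  GenFS (Subgroup.normalizer (V : Set S)) F (NPhi F V)

/-- The generating set `Ψ` for `C_F(V)`: `F`-isomorphisms between subgroups of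
`C_S(V)` extending to `F`-isomorphisms `XV → YV` restricting to the identity on `V`. -/
def CPsi (F : HomPred S) (V : Subgroup S) : HomPred S :=
  fun f X Y => X ≤ Subgroup.centralizer (V : Set S) ∧
    Y ≤ Subgroup.centralizer (V : Set S) ∧ IsFIso F f X Y ∧
    ∃ g, IsFIso F g (X ⊔ V) (Y ⊔ V) ∧ Set.EqOn g f (X : Set S) ∧ ∀ v ∈ V, g v = v

/-- The fusion system `C_F(V)` on `C_S(V)`. -/
def CFus (F : HomPred S) (V : Subgroup S) : HomPred S :=
  GenFS (Subgroup.centralizer (V : Set S)) F (CPsi F V)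

/-- `X ↦ X• = (VX)⋆ ⊓ N_S(V)`. -/
def bulletStar (star : Subgroup S → Subgroup S) (V : Subgroup S) :
    Subgroup S → Subgroup S :=
  fun X => star (V ⊔ X) ⊓ (Subgroup.normalizer (V : Set S))

/-- `N_Ω(V) = {X• : X ≤ N_S(V)}`. -/
def bulletOmega (star : Subgroup S → Subgroup S) (V : Subgroup S) : Set (Subgroup S) :=
  {A | ∃ X : Subgroup S, X ≤ (Subgroup.normalizer (V : Set S)) ∧ A = bulletStar star V X}

/-- `A ↦ A° = (VA)⋆ ⊓ C_S(V)`. -/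
def circStar (star : Subgroup S → Subgroup S) (V : Subgroup S) :
    Subgroup S → Subgroup S :=
  fun A => star (V ⊔ A) ⊓ Subgroup.centralizer (V : Set S)

/-- `C_Ω(V) = {A° : A ≤ C_S(V)}`. -/
def circOmega (star : Subgroup S → Subgroup S) (V : Subgroup S) : Set (Subgroup S) :=
  {A | ∃ X : Subgroup S, X ≤ Subgroup.centralizer (V : Set S) ∧ A = circStar star V X}

/-- `T` is strongly closed in `F`. -/
def StronglyClosedF (F : HomPred S) (T : Subgroup S) : Prop :=
  ∀ X : Subgroup S, X ≤ T → ∀ Y ∈ FConj F X, Y ≤ T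

def MulOn {G H : Type*} [Group G] [Group H] (f : G → H) (X : Subgroup G) : Prop :=
  ∀ x ∈ X, ∀ y ∈ X, f (x * y) = f x * f y

namespace MulOn

variable {G H : Type*} [Group G] [Group H] {f : G → H} {X : Subgroup G}

lemma map_one (hf : MulOn f X) : f 1 = 1 :=
  left_eq_mul.1 (by simpa only [mul_one] using hf 1 X.one_mem 1 X.one_mem)

lemma map_inv (hf : MulOn f X) {x : G} (hx : x ∈ X) : f x⁻¹ = (f x)⁻¹ :=
  eq_inv_of_mul_eq_one_left <| by
    rw [← hf _ (X.inv_mem hx) _ hx, inv_mul_cancel, hf.map_one]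

lemma map_conj (hf : MulOn f X) {x b : G} (hx : x ∈ X) (hb : b ∈ X) :
    f (x * b * x⁻¹) = f x * f b * (f x)⁻¹ := by
  rw [hf _ (X.mul_mem hx hb) _ (X.inv_mem hx), hf _ hx _ hb, hf.map_inv hx]

lemma coe_closure_image (hf : MulOn f X) : (Subgroup.closure (f '' X) : Set H) = f '' X :=
  let I : Subgroup H :=
    { carrier := f '' X
      mul_mem' := by
        rintro _ _ ⟨x, hx, rfl⟩ ⟨y, hy, rfl⟩
        exact ⟨x * y, X.mul_mem hx hy, hf x hx y hy⟩
      one_mem' := ⟨1, X.one_mem, hf.map_one⟩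
      inv_mem' := by
        rintro _ ⟨x, hx, rfl⟩
        exact ⟨x⁻¹, X.inv_mem hx, hf.map_inv hx⟩ }
  congrArg SetLike.coe (Subgroup.closure_eq I)

lemma mapsTo_sup (hf : MulOn f X) {A B : Subgroup G} {C : Subgroup H} (hA : A ≤ X) (hB : B ≤ X)
    (hAC : Set.MapsTo f A C) (hBC : Set.MapsTo f B C) : Set.MapsTo f (A ⊔ B : Subgroup G) C :=
  let K : Subgroup G :=
    { carrier := {s | s ∈ X ∧ f s ∈ C}
      mul_mem' := fun ha hb => ⟨X.mul_mem ha.1 hb.1, by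
        rw [hf _ ha.1 _ hb.1]; exact C.mul_mem ha.2 hb.2⟩
      one_mem' := ⟨X.one_mem, by rw [hf.map_one]; exact C.one_mem⟩
      inv_mem' := fun ha => ⟨X.inv_mem ha.1, by rw [hf.map_inv ha.1]; exact C.inv_mem ha.2⟩ }
  have hK : A ⊔ B ≤ K := sup_le (fun a ha => ⟨hA ha, hAC ha⟩) (fun b hb => ⟨hB hb, hBC hb⟩)
  fun _ hs => (hK hs).2

variable {f : G → G} {P Q V : Subgroup G}

/-- `x` normalizes `V` iff `MulAut.conj x` fixes `V`; both sides of that equation lie in `P`,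
where `f` is injective and carries `conj x` to `conj (f x)`. -/
lemma mem_normalizer_iff (hf : MulOn f P) (hinj : Set.InjOn f P) (hVP : V ≤ P)
    (hV : f '' V = V) {x : G} (hx : x ∈ P) :
    f x ∈ Subgroup.normalizer (V : Set G) ↔ x ∈ Subgroup.normalizer (V : Set G) := by
  have hconj : f '' (MulAut.conj x '' V) = MulAut.conj (f x) '' V := by
    conv_rhs => rw [← hV]
    rw [Set.image_image, Set.image_image]
    exact Set.EqOn.image_eq fun v hv => hf.map_conj hx (hVP hv)
  have hsub : MulAut.conj x '' V ⊆ P := by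
    rintro _ ⟨v, hv, rfl⟩
    exact P.mul_mem (P.mul_mem hx (hVP hv)) (P.inv_mem hx)
  simp only [Subgroup.mem_normalizer_iff_conj_image_eq]
  calc MulAut.conj (f x) '' V = V ↔ f '' (MulAut.conj x '' V) = f '' V := by rw [hconj, hV]
    _ ↔ MulAut.conj x '' V = V := hinj.image_eq_image_iff hsub hVP

lemma image_inf_normalizer (hf : MulOn f P) (hinj : Set.InjOn f P) (hPQ : f '' P = Q)
    (hVP : V ≤ P) (hV : f '' V = V) :
    f '' (P ⊓ Subgroup.normalizer (V : Set G) : Subgroup G) =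
      (Q ⊓ Subgroup.normalizer (V : Set G) : Subgroup G) := by
  ext y
  simp only [Subgroup.coe_inf, Set.mem_image, Set.mem_inter_iff, SetLike.mem_coe]
  constructor
  · rintro ⟨x, ⟨hxP, hxN⟩, rfl⟩
    exact ⟨hPQ.subset (Set.mem_image_of_mem f hxP), (hf.mem_normalizer_iff hinj hVP hV hxP).2 hxN⟩
  · rintro ⟨hyQ, hyN⟩
    obtain ⟨x, hxP, rfl⟩ := hPQ.superset hyQ
    exact ⟨x, ⟨hxP, (hf.mem_normalizer_iff hinj hVP hV hxP).1 hyN⟩, rfl⟩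

end MulOn

/-- `dimOmega Ω` is `sSup (chainLengths Ω)`. -/
def chainLengths (Ω : Set (Subgroup S)) : Set ℕ :=
  {n | ∃ c : Fin (n + 1) → Subgroup S, StrictMono c ∧ ∀ i, c i ∈ Ω}

section Chains

variable {Ω Γ : Set (Subgroup S)}

lemma chainLengths_subset {φ : Subgroup S → Subgroup S} (hφ : StrictMonoOn φ Γ)
    (hmaps : Set.MapsTo φ Γ Ω) : chainLengths Γ ⊆ chainLengths Ω :=
  fun _ ⟨c, hc, hcΓ⟩ => ⟨φ ∘ c, fun _ _ hij => hφ (hcΓ _) (hcΓ _) (hc hij), fun i => hmaps (hcΓ i)⟩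

lemma dimOmega_mem_chainLengths (hbdd : BddAbove (chainLengths Ω)) (hne : Ω.Nonempty) :
    dimOmega Ω ∈ chainLengths Ω :=
  Nat.sSup_mem ⟨0, fun _ => hne.some,
    fun i j hij => (hij.ne (Subsingleton.elim (α := Fin 1) i j)).elim, fun _ => hne.some_mem⟩ hbdd

variable {n : ℕ} {c : Fin (n + 1) → Subgroup S} {B : Subgroup S}

lemma eq_head_of_le (hbdd : BddAbove (chainLengths Ω)) (hc : StrictMono c) (hcΩ : ∀ i, c i ∈ Ω)
    (hn : dimOmega Ω ≤ n) (hB : B ∈ Ω) (hBc : B ≤ c 0) : B = c 0 := by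
  by_contra hne
  have : n + 1 ≤ dimOmega Ω :=
    le_csSup hbdd ⟨Matrix.vecCons B c, hc.vecCons (hBc.lt_of_ne hne), Fin.cases hB hcΩ⟩
  omega

lemma eq_last_of_le (hbdd : BddAbove (chainLengths Ω)) (hc : StrictMono c) (hcΩ : ∀ i, c i ∈ Ω)
    (hn : dimOmega Ω ≤ n) (hB : B ∈ Ω) (hcB : c (Fin.last n) ≤ B) : c (Fin.last n) = B := by
  by_contra hne
  have hsnoc : StrictMono (Fin.snoc c B : Fin (n + 2) → Subgroup S) := by
    rw [← Fin.insertNth_last', Fin.strictMono_insertNth_iff]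
    exact ⟨hc, fun i _ => (hc.monotone (Fin.le_last i)).trans_lt (hcB.lt_of_ne hne),
      fun i hi => absurd hi (by simp)⟩
  have : n + 1 ≤ dimOmega Ω :=
    le_csSup hbdd ⟨Fin.snoc c B, hsnoc, Fin.lastCases (by simpa using hB) (by simpa using hcΩ)⟩
  omega

end Chains

section FusionSystems

variable {F : HomPred S} {V : Subgroup S} {f : S → S} {X Y : Subgroup S}

lemma IsFusionSystem.mulOn {T : Subgroup S} (hF : IsFusionSystem T F) (h : F f X Y) : MulOn f X :=
  hF.map_mul' f X Y h

/-- The hom-sets of `N_F(V)` in the usual definition. -/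
def ExtendsNormalizing (F : HomPred S) (V : Subgroup S) : HomPred S := fun f X Y =>
  X ≤ Subgroup.normalizer (V : Set S) ∧ Y ≤ Subgroup.normalizer (V : Set S) ∧ F f X Y ∧
    ∃ g, F g (X ⊔ V) (Y ⊔ V) ∧ Set.EqOn g f X ∧ g '' V = V

namespace ExtendsNormalizing

lemma conj (hF : IsFusionSystem ⊤ F) {g : S} (hg : g ∈ Subgroup.normalizer (V : Set S))
    (hX : X ≤ Subgroup.normalizer (V : Set S)) (hY : Y ≤ Subgroup.normalizer (V : Set S))
    (hXY : ∀ x ∈ X, g⁻¹ * x * g ∈ Y) : ExtendsNormalizing F V (fun x => g⁻¹ * x * g) X Y := by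
  have hgV : (fun x => g⁻¹ * x * g) '' V = V := by
    convert Subgroup.mem_normalizer_iff_conj_image_eq.1 (inv_mem hg) using 3
    simp
  have hmul : MulOn (fun x => g⁻¹ * x * g) (X ⊔ V) := fun _ _ _ _ => by group
  have hmaps : Set.MapsTo (fun x => g⁻¹ * x * g) (X ⊔ V : Subgroup S) (Y ⊔ V : Subgroup S) :=
    hmul.mapsTo_sup le_sup_left le_sup_right
      (fun x hx => Subgroup.mem_sup_left (hXY x hx))
      (fun v hv => Subgroup.mem_sup_right (hgV.subset (Set.mem_image_of_mem _ hv)))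
  exact ⟨hX, hY, hF.conj_mem g trivial X Y le_top le_top hXY, _,
    hF.conj_mem g trivial _ _ le_top le_top fun x hx => hmaps hx, Set.eqOn_refl _ _, hgV⟩

lemma comp (hF : IsFusionSystem ⊤ F) {g : S → S} {Z : Subgroup S}
    (hf : ExtendsNormalizing F V f X Y) (hg : ExtendsNormalizing F V g Y Z) : ExtendsNormalizing F V (g ∘ f) X Z := by
  obtain ⟨hX, -, hfF, f', hf', hff', hf'V⟩ := hf
  obtain ⟨-, hZ, hgF, g', hg', hgg', hg'V⟩ := hg
  refine ⟨hX, hZ, hF.comp_mem _ _ _ _ _ hfF hgF, g' ∘ f', hF.comp_mem _ _ _ _ _ hf' hg',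
    fun x hx => ?_, by rw [Set.image_comp, hf'V, hg'V]⟩
  simp only [Function.comp_apply, hff' hx, hgg' (hF.mapsTo _ _ _ hfF hx)]

lemma restrict (hF : IsFusionSystem ⊤ F) {X₀ Y₀ : Subgroup S} (h : ExtendsNormalizing F V f X Y)
    (hX₀ : X₀ ≤ X) (hY₀ : Y₀ ≤ Y) (hmaps : Set.MapsTo f X₀ Y₀) : ExtendsNormalizing F V f X₀ Y₀ := by
  obtain ⟨hX, hY, hfF, g, hg, hgf, hgV⟩ := h
  have hmaps' : Set.MapsTo g (X₀ ⊔ V : Subgroup S) (Y₀ ⊔ V : Subgroup S) :=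
    (hF.mulOn hg).mapsTo_sup (hX₀.trans le_sup_left) le_sup_right
      (fun x hx => hgf (hX₀ hx) ▸ Subgroup.mem_sup_left (hmaps hx))
      (fun v hv => Subgroup.mem_sup_right (hgV.subset (Set.mem_image_of_mem g hv)))
  exact ⟨hX₀.trans hX, hY₀.trans hY, hF.restrict_mem _ _ _ _ _ hfF hX₀ hY₀ hmaps, g,
    hF.restrict_mem _ _ _ _ _ hg (sup_le_sup_right hX₀ V) (sup_le_sup_right hY₀ V) hmaps',
    hgf.mono (SetLike.coe_subset_coe.2 hX₀), hgV⟩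

/-- The inverse of the extension `g` of `f` serves at once as the inverse of `f` and as its own
extension. -/
lemma exists_inv (hF : IsFusionSystem ⊤ F) (h : ExtendsNormalizing F V f X Y) :
    ∃ k, ExtendsNormalizing F V k (Subgroup.closure (f '' X)) X ∧ ∀ x ∈ X, k (f x) = x := by
  obtain ⟨hX, hY, hfF, g, hg, hgf, hgV⟩ := h
  obtain ⟨k, hk, hkg⟩ := hF.inv_mem g _ _ hg
  have hfW : Subgroup.closure (f '' X) ≤ Subgroup.closure (g '' (X ⊔ V : Subgroup S)) :=
    Subgroup.closure_mono (hgf.image_eq ▸ Set.image_mono (SetLike.coe_subset_coe.2 le_sup_left))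
  have hVW : V ≤ Subgroup.closure (g '' (X ⊔ V : Subgroup S)) := fun v hv =>
    Subgroup.subset_closure
      (Set.image_mono (SetLike.coe_subset_coe.2 le_sup_right) (hgV.superset hv))
  have hkf : ∀ x ∈ X, k (f x) = x := fun x hx => hgf hx ▸ hkg x (Subgroup.mem_sup_left hx)
  have hkV : k '' V = V := by
    conv_lhs => rw [← hgV, Set.image_image]
    exact (Set.image_congr fun v hv => hkg v (Subgroup.mem_sup_right hv)).trans (Set.image_id _)
  have hfY : Subgroup.closure (f '' X) ≤ Y :=
    (Subgroup.closure_le Y).2 (hF.mapsTo _ _ _ hfF).image_subset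
  have hmaps : Set.MapsTo k (Subgroup.closure (f '' X) : Set S) X := by
    rw [(hF.mulOn hfF).coe_closure_image]
    rintro _ ⟨x, hx, rfl⟩
    rw [hkf x hx]
    exact hx
  refine ⟨k, ⟨hfY.trans hY, hX, hF.restrict_mem _ _ _ _ _ hk hfW le_sup_left hmaps, k,
    hF.restrict_mem _ _ _ _ _ hk (sup_le hfW hVW) le_rfl
      ((hF.mapsTo _ _ _ hk).mono_left (SetLike.coe_subset_coe.2 (sup_le hfW hVW))),
    Set.eqOn_refl _ _, hkV⟩, hkf⟩

end ExtendsNormalizing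

lemma isFusionSystem_extendsNormalizing (hF : IsFusionSystem ⊤ F) (V : Subgroup S) :
    IsFusionSystem (Subgroup.normalizer (V : Set S)) (ExtendsNormalizing F V) where
  le_base _ _ _ h := ⟨h.1, h.2.1⟩
  mapsTo _ _ _ h := hF.mapsTo _ _ _ h.2.2.1
  injOn _ _ _ h := hF.injOn _ _ _ h.2.2.1
  map_mul' _ _ _ h := hF.map_mul' _ _ _ h.2.2.1
  of_eqOn _ _ _ _ h hgf :=
    let ⟨hX, hY, hfF, g', hg', hg'f, hg'V⟩ := h
    ⟨hX, hY, hF.of_eqOn _ _ _ _ hfF hgf, g', hg', hg'f.trans hgf.symm, hg'V⟩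
  conj_mem _ hg _ _ hX hY hXY := ExtendsNormalizing.conj hF hg hX hY hXY
  comp_mem _ _ _ _ _ hf hg := ExtendsNormalizing.comp hF hf hg
  restrict_mem _ _ _ _ _ h hX₀ hY₀ hmaps := ExtendsNormalizing.restrict hF h hX₀ hY₀ hmaps
  corestrict_mem _ _ _ h := ExtendsNormalizing.restrict hF h le_rfl
    ((Subgroup.closure_le _).2 (hF.mapsTo _ _ _ h.2.2.1).image_subset)
    fun _ hx => Subgroup.subset_closure (Set.mem_image_of_mem _ hx)
  inv_mem _ _ _ h := ExtendsNormalizing.exists_inv hF h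

lemma NPhi.nFus (h : NPhi F V f X Y) : NFus F V f X Y :=
  fun _ _ _ hΦ => hΦ f X Y h

lemma NFus.extendsNormalizing (hF : IsFusionSystem ⊤ F) (h : NFus F V f X Y) :
    ExtendsNormalizing F V f X Y :=
  h _ (isFusionSystem_extendsNormalizing hF V) (fun _ _ _ h => h.2.2.1)
    fun _ _ _ ⟨hX, hY, hf, g, hg, hgf, hgV⟩ => ⟨hX, hY, hf.1, g, hg.1, hgf, hgV⟩

lemma exists_isFIso_sup_of_isFIso_nFus (hF : IsFusionSystem ⊤ F) (h : IsFIso (NFus F V) f X Y) :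
    ∃ g, IsFIso F g (X ⊔ V) (Y ⊔ V) ∧ Set.EqOn g f X ∧ g '' V = V := by
  obtain ⟨-, -, -, g, hg, hgf, hgV⟩ := h.1.extendsNormalizing hF
  refine ⟨g, ⟨hg, (hF.mapsTo _ _ _ hg).image_subset.antisymm ?_⟩, hgf, hgV⟩
  rw [← (hF.mulOn hg).coe_closure_image]
  refine SetLike.coe_subset_coe.2 (sup_le (fun y hy => ?_) fun v hv => ?_)
  · rw [← SetLike.mem_coe, ← h.2, ← hgf.image_eq] at hy
    exact Subgroup.subset_closure (Set.image_mono (SetLike.coe_subset_coe.2 le_sup_left) hy)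
  · exact Subgroup.subset_closure
      (Set.image_mono (SetLike.coe_subset_coe.2 le_sup_right) (hgV.superset hv))

section Stratification

variable {Ω : Set (Subgroup S)} {star : Subgroup S → Subgroup S}

lemma le_normalizer_of_mem_bulletOmega {A : Subgroup S} (hA : A ∈ bulletOmega star V) :
    A ≤ Subgroup.normalizer (V : Set S) := by
  obtain ⟨X, -, rfl⟩ := hA
  exact inf_le_right

lemma sup_le_bulletStar (hΩ : IsStratification ⊤ F Ω star)
    (hX : X ≤ Subgroup.normalizer (V : Set S)) : V ⊔ X ≤ bulletStar star V X :=
  le_inf (hΩ.le_star _ le_top) (sup_le Subgroup.le_normalizer hX)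

lemma star_bulletStar (hΩ : IsStratification ⊤ F Ω star)
    (hX : X ≤ Subgroup.normalizer (V : Set S)) : star (bulletStar star V X) = star (V ⊔ X) :=
  le_antisymm
    ((hΩ.star_mono _ _ le_top le_top inf_le_left).trans_eq (hΩ.star_fix _ (hΩ.star_mem _ le_top)))
    (hΩ.star_mono _ _ le_top le_top (sup_le_bulletStar hΩ hX))

lemma bulletStar_bulletStar (hΩ : IsStratification ⊤ F Ω star)
    (hX : X ≤ Subgroup.normalizer (V : Set S)) :
    bulletStar star V (bulletStar star V X) = bulletStar star V X := by
  rw [bulletStar, sup_eq_right.2 (le_sup_left.trans (sup_le_bulletStar hΩ hX)),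
    star_bulletStar hΩ hX, bulletStar]

lemma star_inf_normalizer_of_mem_bulletOmega (hΩ : IsStratification ⊤ F Ω star) {A : Subgroup S}
    (hA : A ∈ bulletOmega star V) : star A ⊓ Subgroup.normalizer (V : Set S) = A := by
  obtain ⟨X, hX, rfl⟩ := hA
  rw [star_bulletStar hΩ hX, bulletStar]

lemma injOn_star_bulletOmega (hΩ : IsStratification ⊤ F Ω star) :
    Set.InjOn star (bulletOmega star V) := fun A hA B hB h => by
  rw [← star_inf_normalizer_of_mem_bulletOmega hΩ hA,
    ← star_inf_normalizer_of_mem_bulletOmega hΩ hB, h]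

lemma strictMonoOn_star_bulletOmega (hΩ : IsStratification ⊤ F Ω star) :
    StrictMonoOn star (bulletOmega star V) := fun _ hA _ hB hAB =>
  (hΩ.star_mono _ _ le_top le_top hAB.le).lt_of_ne fun h =>
    hAB.ne (injOn_star_bulletOmega hΩ hA hB h)

lemma exists_isFIso_bulletStar (hF : IsFusionSystem ⊤ F) (hΩ : IsStratification ⊤ F Ω star)
    (hf : IsFIso (NFus F V) f X Y) :
    ∃ k, IsFIso (NFus F V) k (bulletStar star V X) (bulletStar star V Y) ∧ Set.EqOn k f X := by
  obtain ⟨hX, hY, -⟩ := hf.1.extendsNormalizing hF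
  obtain ⟨g, hg, hgf, hgV⟩ := exists_isFIso_sup_of_isFIso_nFus hF hf
  obtain ⟨k, hk, hkg⟩ := hΩ.extend_star g _ _ hg
  rw [sup_comm X, sup_comm Y] at hk
  have hkV : k '' V = V :=
    (hkg.mono (SetLike.coe_subset_coe.2 le_sup_right)).image_eq.trans hgV
  have hk_bullet : k '' bulletStar star V X = bulletStar star V Y :=
    (hF.mulOn hk.1).image_inf_normalizer (hF.injOn _ _ _ hk.1) hk.2
      (le_sup_left.trans (hΩ.le_star _ le_top)) hkV
  have hkF : IsFIso F k (bulletStar star V X) (bulletStar star V Y) :=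
    ⟨hF.restrict_mem _ _ _ _ _ hk.1 inf_le_left inf_le_left (hk_bullet ▸ Set.mapsTo_image k _),
      hk_bullet⟩
  have hkF' : IsFIso F k (bulletStar star V X ⊔ V) (bulletStar star V Y ⊔ V) := by
    rwa [sup_eq_left.2 (le_sup_left.trans (sup_le_bulletStar hΩ hX)),
      sup_eq_left.2 (le_sup_left.trans (sup_le_bulletStar hΩ hY))]
  exact ⟨k, ⟨NPhi.nFus ⟨inf_le_right, inf_le_right, hkF, k, hkF', Set.eqOn_refl _ _, hkV⟩,
    hk_bullet⟩, (hkg.mono (SetLike.coe_subset_coe.2 le_sup_left)).trans hgf⟩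

lemma IsStratification.bddAbove_chainLengths {T : Subgroup S}
    (hΩ : IsStratification T F Ω star) : BddAbove (chainLengths Ω) :=
  hΩ.finDim

lemma IsStratification.top_mem (hΩ : IsStratification ⊤ F Ω star) : ⊤ ∈ Ω :=
  top_unique (hΩ.le_star ⊤ le_top) ▸ hΩ.star_mem ⊤ le_top

lemma bddAbove_chainLengths_bulletOmega (hΩ : IsStratification ⊤ F Ω star) :
    BddAbove (chainLengths (bulletOmega star V)) :=
  hΩ.bddAbove_chainLengths.mono <|
    chainLengths_subset (strictMonoOn_star_bulletOmega hΩ) fun A _ => hΩ.star_mem A le_top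

lemma isStratification_bulletOmega (hF : IsFusionSystem ⊤ F) (hΩ : IsStratification ⊤ F Ω star)
    (V : Subgroup S) :
    IsStratification (Subgroup.normalizer (V : Set S)) (NFus F V) (bulletOmega star V)
      (bulletStar star V) where
  omega_le _ hA := le_normalizer_of_mem_bulletOmega hA
  star_mem X hX := ⟨X, hX, rfl⟩
  star_fix := by
    rintro _ ⟨X, hX, rfl⟩
    exact bulletStar_bulletStar hΩ hX
  star_mono _ _ _ _ hXY :=
    inf_le_inf_right _ (hΩ.star_mono _ _ le_top le_top (sup_le_sup_left hXY V))
  finDim := bddAbove_chainLengths_bulletOmega hΩ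
  conj_invariant := by
    rintro _ ⟨X, hX, rfl⟩ f Y hf
    obtain ⟨k, hk, hkf⟩ := exists_isFIso_bulletStar hF hΩ hf
    refine ⟨Y, (hf.1.extendsNormalizing hF).2.1, SetLike.coe_injective ?_⟩
    calc (Y : Set S) = f '' bulletStar star V X := hf.2.symm
      _ = k '' bulletStar star V (bulletStar star V X) := by
        rw [bulletStar_bulletStar hΩ hX, hkf.image_eq]
      _ = bulletStar star V Y := hk.2
  le_star _ hX := le_sup_right.trans (sup_le_bulletStar hΩ hX)
  extend_star _ _ _ hf := exists_isFIso_bulletStar hF hΩ hf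

lemma le_star_bot_and_star_normalizer_eq_top (hΩ : IsStratification ⊤ F Ω star)
    (hdim : dimOmega (bulletOmega star V) = dimOmega Ω) :
    V ≤ star ⊥ ∧ star (Subgroup.normalizer (V : Set S)) = ⊤ := by
  obtain ⟨c, hc, hcN⟩ :=
    dimOmega_mem_chainLengths (bddAbove_chainLengths_bulletOmega hΩ) ⟨_, ⊥, bot_le, rfl⟩
  have hd : StrictMono (star ∘ c) := fun _ _ hij =>
    strictMonoOn_star_bulletOmega hΩ (hcN _) (hcN _) (hc hij)
  have hdΩ : ∀ i, star (c i) ∈ Ω := fun i => hΩ.star_mem _ le_top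
  have hbot : star ⊥ = star (c 0) := eq_head_of_le hΩ.bddAbove_chainLengths hd hdΩ hdim.ge
    (hΩ.star_mem ⊥ le_top) (hΩ.star_mono _ _ le_top le_top bot_le)
  have htop : star (c (Fin.last _)) = ⊤ :=
    eq_last_of_le hΩ.bddAbove_chainLengths hd hdΩ hdim.ge hΩ.top_mem le_top
  obtain ⟨X, hX, hc0⟩ := hcN 0
  refine ⟨?_, top_unique (htop ▸ hΩ.star_mono _ _ le_top le_top ?_)⟩
  · rw [hbot, hc0, star_bulletStar hΩ hX]
    exact le_sup_left.trans (hΩ.le_star _ le_top)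
  · exact le_normalizer_of_mem_bulletOmega (hcN _)

end Stratification

end FusionSystems

/-- Lemma 2.6, normalizer part. `(N_Ω(V), •)` is a stratification on
`N_F(V)`; the map `X ↦ X⋆` is an injective homomorphism of posets `N_Ω(V) → Ω`; and if
`dim(N_Ω(V)) = dim(Ω)` then `V ≤ 1⋆` and `R⋆ = S`, where `R = N_S(V)`. -/
theorem stratification_on_normalizer
    {S : Type*} [Group S] (F : HomPred S)
    (Ω : Set (Subgroup S)) (star : Subgroup S → Subgroup S)
    (hF : IsFusionSystem ⊤ F) (hΩ : IsStratification ⊤ F Ω star)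
    (V : Subgroup S) :
    IsStratification (Subgroup.normalizer (V : Set S)) (NFus F V) (bulletOmega star V) (bulletStar star V) ∧
    ((∀ A ∈ bulletOmega star V, star A ∈ Ω) ∧
      (∀ A ∈ bulletOmega star V, ∀ B ∈ bulletOmega star V, A ≤ B → star A ≤ star B) ∧
      Set.InjOn star (bulletOmega star V)) ∧
    (dimOmega (bulletOmega star V) = dimOmega Ω →
      V ≤ star ⊥ ∧ star (Subgroup.normalizer (V : Set S)) = ⊤) :=
  ⟨isStratification_bulletOmega hF hΩ V,
    ⟨fun A _ => hΩ.star_mem A le_top, fun A _ B _ hAB => hΩ.star_mono A B le_top le_top hAB,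
      injOn_star_bulletOmega hΩ⟩,
    le_star_bot_and_star_normalizer_eq_top hΩ⟩
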